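/- Assume 0 ≤ β < 1 and ω > 0 satisfy ω + 2β < 2 with β = 0 (i.e., 0 < ω < 2), and let x* be any vector with A x* = b. Let x̂_k = (1/k) Σ_{t=1}^{k} x_t be the Cesaro average of the SGD iterates x_{t+1} = x_t − ω Aᵀ H_t (A x_t − b). Then for all k ≥ 1, E[f(x̂_k)] ≤ ‖x0 − x*‖² / (2ω(2 − ω) k). -/

import Mathlib

/-!
Along every sample path, one SGD step with a symmetric `H` satisfying `H A Aᵀ H = H` lowers
`‖x - x*‖²` by exactly `ω(2 - ω) (A x - b)ᵀ H (A x - b)`. Telescoping bounds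
`ω(2 - ω) ∑ₜ (A xₜ - b)ᵀ Hₜ (A xₜ - b)` by `‖x₀ - x*‖²` and keeps the iterates bounded, so all
expectations involved are finite. Since `xₜ` is a function of `H₀, …, Hₜ₋₁`, it is independent of
`Hₜ`, and the `t`-th summand has expectation `E[(A xₜ - b)ᵀ W (A xₜ - b)] = 2 E[f(xₜ)]`. Finally
`W`, a mean of positive semidefinite matrices, is positive semidefinite, so `f` is convex and
Jensen's inequality bounds `f(x̂ₖ)` by the average of the `f(xₜ)`.
-/

open Matrix MeasureTheory ProbabilityTheory

/-- Matrices over measurable entries carry the product σ-algebra. -/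
local instance {m n : ℕ} : MeasurableSpace (Matrix (Fin m) (Fin n) ℝ) :=
  MeasurableSpace.pi

local instance {m n : ℕ} : BorelSpace (Matrix (Fin m) (Fin n) ℝ) := Pi.borelSpace

namespace Matrix

variable {n p : Type*}

lemma PosSemidef.isSymm {M : Matrix n n ℝ} (hM : M.PosSemidef) : M.IsSymm :=
  (conjTranspose_eq_transpose_of_trivial M).symm.trans hM.1

variable [Fintype n]

lemma dotProduct_mulVec_self_eq_sum (M : Matrix n n ℝ) (v : n → ℝ) :
    v ⬝ᵥ (M *ᵥ v) = ∑ i, ∑ j, v i * v j * M i j := by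
  simp only [dotProduct, mulVec, Finset.mul_sum]
  exact Finset.sum_congr rfl fun i _ => Finset.sum_congr rfl fun j _ => by ring

lemma IsSymm.dotProduct_mulVec_comm {M : Matrix n n ℝ} (hM : M.IsSymm) (u v : n → ℝ) :
    u ⬝ᵥ (M *ᵥ v) = v ⬝ᵥ (M *ᵥ u) := by
  rw [dotProduct_mulVec, ← mulVec_transpose, hM.eq, dotProduct_comm]

lemma abs_mulVec_apply_le (A : Matrix p n ℝ) (v : n → ℝ) (i : p) :
    |(A *ᵥ v) i| ≤ (∑ j, |A i j|) * √(v ⬝ᵥ v) := by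
  have hv : ∀ j, |v j| ≤ √(v ⬝ᵥ v) := fun j => Real.abs_le_sqrt <| by
    simpa only [dotProduct, sq] using Finset.single_le_sum (f := fun j => v j * v j)
      (fun j _ => mul_self_nonneg (v j)) (Finset.mem_univ j)
  calc |(A *ᵥ v) i| ≤ ∑ j, |A i j| * |v j| := by
        simpa only [mulVec, dotProduct, abs_mul] using
          Finset.abs_sum_le_sum_abs (fun j => A i j * v j) Finset.univ
    _ ≤ ∑ j, |A i j| * √(v ⬝ᵥ v) :=
        Finset.sum_le_sum fun j _ => mul_le_mul_of_nonneg_left (hv j) (abs_nonneg _)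
    _ = (∑ j, |A i j|) * √(v ⬝ᵥ v) := (Finset.sum_mul ..).symm

lemma PosSemidef.convexOn_dotProduct_mulVec {W : Matrix n n ℝ} (hW : W.PosSemidef) :
    ConvexOn ℝ Set.univ fun v => v ⬝ᵥ (W *ᵥ v) := by
  refine ⟨convex_univ, fun u _ v _ a b ha hb hab => ?_⟩
  have huv := hW.dotProduct_mulVec_nonneg (u - v)
  simp only [star_trivial, mulVec_sub, sub_dotProduct, dotProduct_sub] at huv
  simp only [mulVec_add, mulVec_smul, add_dotProduct, dotProduct_add, smul_dotProduct,
    dotProduct_smul, smul_eq_mul]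
  obtain rfl : b = 1 - a := by linarith
  -- `a q(u) + (1 - a) q(v) - q(a u + (1 - a) v) = a (1 - a) q(u - v)`
  nlinarith [mul_nonneg (mul_nonneg ha hb) huv]

end Matrix

lemma ConvexOn.map_inv_card_smul_sum_le {E ι : Type*} [AddCommGroup E] [Module ℝ E] {φ : E → ℝ}
    (hφ : ConvexOn ℝ Set.univ φ) {s : Finset ι} (hs : s.Nonempty) (x : ι → E) :
    φ ((s.card : ℝ)⁻¹ • ∑ t ∈ s, x t) ≤ (s.card : ℝ)⁻¹ * ∑ t ∈ s, φ (x t) := by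
  have hcard : (s.card : ℝ) ≠ 0 := by positivity
  simpa only [Finset.smul_sum, Finset.mul_sum, smul_eq_mul] using
    hφ.map_sum_le (w := fun _ => (s.card : ℝ)⁻¹) (fun _ _ => by positivity) (by simp [hcard])
      (fun _ _ => Set.mem_univ _)

lemma mul_sum_range_add_eq_of_sub_eq {N g : ℕ → ℝ} {c : ℝ} (h : ∀ t, N (t + 1) = N t - c * g t)
    (n : ℕ) : c * ∑ t ∈ Finset.range n, g t + N n = N 0 := by
  have : c * ∑ t ∈ Finset.range n, g t = ∑ t ∈ Finset.range n, (N t - N (t + 1)) := by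
    rw [Finset.mul_sum]
    exact Finset.sum_congr rfl fun t _ => by rw [h t]; ring
  rw [this, Finset.sum_range_sub']
  ring

section Expectation

variable {Ω : Type*} {mΩ : MeasurableSpace Ω} {μ : Measure Ω}

section

variable {n : Type*} [Fintype n] {v : Ω → n → ℝ} {M : Ω → Matrix n n ℝ}

lemma integrable_dotProduct_mulVec_self
    (h : ∀ i j, Integrable (fun s => v s i * v s j * M s i j) μ) :
    Integrable (fun s => v s ⬝ᵥ (M s *ᵥ v s)) μ := by
  simp only [dotProduct_mulVec_self_eq_sum]
  exact integrable_finsetSum _ fun i _ => integrable_finsetSum _ fun j _ => h i j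

lemma integral_dotProduct_mulVec_self
    (h : ∀ i j, Integrable (fun s => v s i * v s j * M s i j) μ) :
    ∫ s, v s ⬝ᵥ (M s *ᵥ v s) ∂μ = ∑ i, ∑ j, ∫ s, v s i * v s j * M s i j ∂μ := by
  simp only [dotProduct_mulVec_self_eq_sum]
  rw [integral_finsetSum _ fun i _ => integrable_finsetSum _ fun j _ => h i j]
  exact Finset.sum_congr rfl fun i _ => integral_finsetSum _ fun j _ => h i j

lemma posSemidef_of_ae_posSemidef {W : Matrix n n ℝ} (hM : ∀ᵐ s ∂μ, (M s).PosSemidef)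
    (hint : ∀ i j, Integrable (fun s => M s i j) μ) (hW : ∀ i j, W i j = ∫ s, M s i j ∂μ) :
    W.PosSemidef := by
  refine PosSemidef.of_dotProduct_mulVec_nonneg ?_ fun z => ?_
  · ext i j
    simp only [conjTranspose_apply, star_trivial, hW]
    refine integral_congr_ae ?_
    filter_upwards [hM] with s hs using hs.1.apply i j
  · have hz : ∀ i j, Integrable (fun s => z i * z j * M s i j) μ := fun i j =>
      (hint i j).const_mul _
    have hmean : z ⬝ᵥ (W *ᵥ z) = ∫ s, z ⬝ᵥ (M s *ᵥ z) ∂μ := by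
      rw [integral_dotProduct_mulVec_self (v := fun _ => z) hz, dotProduct_mulVec_self_eq_sum]
      simp only [hW, integral_const_mul]
    rw [star_trivial, hmean]
    refine integral_nonneg_of_ae ?_
    filter_upwards [hM] with s hs
    simpa only [star_trivial, Pi.zero_apply] using hs.dotProduct_mulVec_nonneg z

lemma integrable_mulVec_apply_mul_of_ae_dotProduct_self_le [IsFiniteMeasure μ] {p : Type*}
    (A : Matrix p n ℝ) {y : Ω → n → ℝ} (hy : Measurable y) {R : ℝ}
    (hR : ∀ᵐ s ∂μ, y s ⬝ᵥ y s ≤ R) (i j : p) :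
    Integrable (fun s => (A *ᵥ y s) i * (A *ᵥ y s) j) μ := by
  have hA : ∀ i, ∀ᵐ s ∂μ, |(A *ᵥ y s) i| ≤ (∑ k, |A i k|) * √R := fun i => by
    filter_upwards [hR] with s hs
    exact (abs_mulVec_apply_le A (y s) i).trans
      (mul_le_mul_of_nonneg_left (Real.sqrt_le_sqrt hs) (Finset.sum_nonneg fun _ _ => abs_nonneg _))
  refine Integrable.of_bound (by fun_prop)
    ((∑ k, |A i k|) * √R * ((∑ k, |A j k|) * √R)) ?_
  filter_upwards [hA i, hA j] with s hi hj
  rw [Real.norm_eq_abs, abs_mul]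
  exact mul_le_mul hi hj (abs_nonneg _) ((abs_nonneg _).trans hi)

end

lemma integrable_and_integral_dotProduct_mulVec_self_of_indepFun {m : ℕ} {v : Ω → Fin m → ℝ}
    {M : Ω → Matrix (Fin m) (Fin m) ℝ} {W : Matrix (Fin m) (Fin m) ℝ} (hind : IndepFun v M μ)
    (hv : ∀ i j, Integrable (fun s => v s i * v s j) μ)
    (hM : ∀ i j, Integrable (fun s => M s i j) μ) (hW : ∀ i j, ∫ s, M s i j ∂μ = W i j) :
    Integrable (fun s => v s ⬝ᵥ (M s *ᵥ v s)) μ ∧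
      ∫ s, v s ⬝ᵥ (M s *ᵥ v s) ∂μ = ∫ s, v s ⬝ᵥ (W *ᵥ v s) ∂μ := by
  have hind' : ∀ i j, IndepFun (fun s => v s i * v s j) (fun s => M s i j) μ := fun i j =>
    hind.comp (φ := fun u : Fin m → ℝ => u i * u j) (ψ := fun N : Matrix _ _ ℝ => N i j)
      (by fun_prop) (by fun_prop)
  have hprod : ∀ i j, Integrable (fun s => v s i * v s j * M s i j) μ := fun i j =>
    (hind' i j).integrable_mul (hv i j) (hM i j)
  refine ⟨integrable_dotProduct_mulVec_self hprod, ?_⟩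
  rw [integral_dotProduct_mulVec_self hprod,
    integral_dotProduct_mulVec_self (M := fun _ => W) fun i j => (hv i j).mul_const _]
  refine Finset.sum_congr rfl fun i _ => Finset.sum_congr rfl fun j _ => ?_
  rw [integral_mul_const, ← hW]
  exact (hind' i j).integral_mul_eq_mul_integral (hv i j).aestronglyMeasurable
    (hM i j).aestronglyMeasurable

variable {β γ : Type*} [mβ : MeasurableSpace β] [MeasurableSpace γ] {H : ℕ → Ω → β}
  {x : ℕ → Ω → γ} {Φ : β → γ → γ}

lemma measurable_iSup_comap_of_recursion (hΦ : Measurable (Function.uncurry Φ)) {x₀ : γ}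
    (hx0 : ∀ s, x 0 s = x₀) (hrec : ∀ t s, x (t + 1) s = Φ (H t s) (x t s)) (t : ℕ) :
    Measurable[⨆ i ∈ Set.Iio t, mβ.comap (H i)] (x t) := by
  induction t with
  | zero => simpa only [funext hx0] using measurable_const
  | succ t ih =>
    have hH : Measurable[⨆ i ∈ Set.Iio (t + 1), mβ.comap (H i)] (H t) :=
      Measurable.of_comap_le (le_iSup₂ (f := fun i (_ : i ∈ Set.Iio (t + 1)) => mβ.comap (H i))
        t (Set.mem_Iio.2 t.lt_succ_self))
    have hx : Measurable[⨆ i ∈ Set.Iio (t + 1), mβ.comap (H i)] (x t) :=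
      ih.mono (biSup_mono fun i hi => lt_trans hi t.lt_succ_self) le_rfl
    rw [funext (hrec t)]
    exact hΦ.comp (hH.prodMk hx)

lemma indepFun_of_recursion (hH : ∀ t, Measurable (H t)) (hind : iIndepFun H μ)
    (hΦ : Measurable (Function.uncurry Φ)) {x₀ : γ} (hx0 : ∀ s, x 0 s = x₀)
    (hrec : ∀ t s, x (t + 1) s = Φ (H t s) (x t s)) (t : ℕ) : IndepFun (x t) (H t) μ := by
  have hpast := indep_iSup_of_disjoint (fun i => (hH i).comap_le)
    ((iIndepFun_iff_iIndep _ H μ).1 hind) (S := Set.Iio t) (T := {t})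
    (Set.disjoint_singleton_right.2 (lt_irrefl t))
  rw [iSup_singleton] at hpast
  exact (IndepFun_iff_Indep _ _ μ).2 (indep_of_indep_of_le_left hpast
    (measurable_iSup_comap_of_recursion hΦ hx0 hrec t).comap_le)

end Expectation

section SGD

variable {m d : Type*} [Fintype m] [Fintype d]

def sgdStep (A : Matrix m d ℝ) (b : m → ℝ) (ω : ℝ) (M : Matrix m m ℝ) (y : d → ℝ) : d → ℝ :=
  y - ω • (Aᵀ *ᵥ (M *ᵥ (A *ᵥ y - b)))

def residualForm (A : Matrix m d ℝ) (b : m → ℝ) (M : Matrix m m ℝ) (y : d → ℝ) : ℝ :=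
  (A *ᵥ y - b) ⬝ᵥ (M *ᵥ (A *ᵥ y - b))

variable {A : Matrix m d ℝ} {b : m → ℝ} {xstar : d → ℝ} {ω : ℝ}

lemma Matrix.PosSemidef.convexOn_residualForm {W : Matrix m m ℝ} (hW : W.PosSemidef) :
    ConvexOn ℝ Set.univ (residualForm A b W) := by
  rw [← Set.preimage_univ]
  exact hW.convexOn_dotProduct_mulVec.comp_affineMap
    ((mulVecLin A).toAffineMap - AffineMap.const ℝ (d → ℝ) b)

lemma Matrix.PosSemidef.residualForm_nonneg {W : Matrix m m ℝ} (hW : W.PosSemidef) (y : d → ℝ) :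
    0 ≤ residualForm A b W y := by
  simpa only [residualForm, star_trivial] using hW.dotProduct_mulVec_nonneg (A *ᵥ y - b)

lemma integral_residualForm_inv_card_smul_sum_le {Ω : Type*} {mΩ : MeasurableSpace Ω}
    {μ : Measure Ω} {W : Matrix m m ℝ} (hW : W.PosSemidef) {x : ℕ → Ω → d → ℝ}
    (hint : ∀ t, Integrable (fun s => residualForm A b W (x t s)) μ) {T : Finset ℕ}
    (hT : T.Nonempty) :
    ∫ s, residualForm A b W ((T.card : ℝ)⁻¹ • ∑ t ∈ T, x t s) ∂μ
      ≤ (T.card : ℝ)⁻¹ * ∑ t ∈ T, ∫ s, residualForm A b W (x t s) ∂μ := by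
  rw [← integral_finsetSum _ fun t _ => hint t, ← integral_const_mul]
  exact integral_mono_of_nonneg (ae_of_all _ fun _ => hW.residualForm_nonneg _)
    ((integrable_finsetSum _ fun t _ => hint t).const_mul _)
    (ae_of_all _ fun s => hW.convexOn_residualForm.map_inv_card_smul_sum_le hT (x · s))

lemma dotProduct_self_sgdStep_sub (hxstar : A *ᵥ xstar = b) {M : Matrix m m ℝ}
    (hM : M.IsSymm) (hMAM : M * (A * Aᵀ) * M = M) (y : d → ℝ) :
    (sgdStep A b ω M y - xstar) ⬝ᵥ (sgdStep A b ω M y - xstar)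
      = (y - xstar) ⬝ᵥ (y - xstar) - ω * (2 - ω) * residualForm A b M y := by
  unfold residualForm
  set e := A *ᵥ y - b
  set w := Aᵀ *ᵥ (M *ᵥ e)
  have he : e = A *ᵥ (y - xstar) := by rw [mulVec_sub, hxstar]
  have hcross : (y - xstar) ⬝ᵥ w = e ⬝ᵥ (M *ᵥ e) := by
    rw [dotProduct_mulVec, vecMul_transpose, ← he]
  have hsq : w ⬝ᵥ w = e ⬝ᵥ (M *ᵥ e) := by
    rw [dotProduct_mulVec, vecMul_transpose, mulVec_mulVec, hM.dotProduct_mulVec_comm,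
      mulVec_mulVec, mulVec_mulVec, hMAM]
  have hstep : sgdStep A b ω M y - xstar = (y - xstar) - ω • w := sub_right_comm _ _ _
  rw [hstep]
  set v := y - xstar
  simp only [sub_dotProduct, dotProduct_sub, smul_dotProduct, dotProduct_smul, smul_eq_mul,
    dotProduct_comm w v, hcross, hsq]
  ring

variable {M : ℕ → Matrix m m ℝ} {y : ℕ → d → ℝ}

lemma sgd_energy_eq (hxstar : A *ᵥ xstar = b)
    (hM : ∀ t, (M t).IsSymm ∧ M t * (A * Aᵀ) * M t = M t)
    (hy : ∀ t, y (t + 1) = sgdStep A b ω (M t) (y t)) (n : ℕ) :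
    ω * (2 - ω) * ∑ t ∈ Finset.range n, residualForm A b (M t) (y t)
      + (y n - xstar) ⬝ᵥ (y n - xstar) = (y 0 - xstar) ⬝ᵥ (y 0 - xstar) :=
  mul_sum_range_add_eq_of_sub_eq (N := fun t => (y t - xstar) ⬝ᵥ (y t - xstar))
    (fun t => by rw [hy, dotProduct_self_sgdStep_sub hxstar (hM t).1 (hM t).2]) n

lemma sgd_dist_le_and_mul_sum_le (hxstar : A *ᵥ xstar = b) (hω0 : 0 ≤ ω) (hω2 : ω ≤ 2)
    (hM : ∀ t, (M t).PosSemidef ∧ M t * (A * Aᵀ) * M t = M t)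
    (hy : ∀ t, y (t + 1) = sgdStep A b ω (M t) (y t)) :
    (∀ t, (y t - xstar) ⬝ᵥ (y t - xstar) ≤ (y 0 - xstar) ⬝ᵥ (y 0 - xstar)) ∧
      ∀ s : Finset ℕ, ω * (2 - ω) * ∑ t ∈ s, residualForm A b (M t) (y t)
        ≤ (y 0 - xstar) ⬝ᵥ (y 0 - xstar) := by
  have henergy := sgd_energy_eq hxstar (fun t => ⟨(hM t).1.isSymm, (hM t).2⟩) hy
  have hc : 0 ≤ ω * (2 - ω) := mul_nonneg hω0 (by linarith)
  have hg : ∀ t, 0 ≤ residualForm A b (M t) (y t) := fun t => (hM t).1.residualForm_nonneg _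
  have hdist : ∀ n, 0 ≤ (y n - xstar) ⬝ᵥ (y n - xstar) := fun n =>
    Finset.sum_nonneg fun i _ => mul_self_nonneg _
  refine ⟨fun t => ?_, fun s => ?_⟩
  · nlinarith [henergy t, Finset.sum_nonneg fun u (_ : u ∈ Finset.range t) => hg u]
  · have hsub := Finset.sum_le_sum_of_subset_of_nonneg (Finset.subset_range_sup_succ s)
      fun t _ _ => hg t
    nlinarith [henergy (s.sup id).succ, hdist (s.sup id).succ]

end SGD

lemma measurable_uncurry_sgdStep {m d : ℕ} (A : Matrix (Fin m) (Fin d) ℝ) (b : Fin m → ℝ)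
    (ω : ℝ) : Measurable (Function.uncurry (sgdStep A b ω)) := by
  apply Continuous.measurable
  unfold sgdStep
  fun_prop

lemma integrable_and_integral_residualForm_of_indepFun {Ω : Type*} {mΩ : MeasurableSpace Ω}
    {μ : Measure Ω} [IsFiniteMeasure μ] {m d : ℕ} {A : Matrix (Fin m) (Fin d) ℝ} {b : Fin m → ℝ}
    {xstar : Fin d → ℝ} (hxstar : A *ᵥ xstar = b) {y : Ω → Fin d → ℝ} (hy : Measurable y)
    {R : ℝ} (hR : ∀ᵐ s ∂μ, (y s - xstar) ⬝ᵥ (y s - xstar) ≤ R)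
    {M : Ω → Matrix (Fin m) (Fin m) ℝ} {W : Matrix (Fin m) (Fin m) ℝ} (hind : IndepFun y M μ)
    (hM : ∀ i j, Integrable (fun s => M s i j) μ) (hW : ∀ i j, ∫ s, M s i j ∂μ = W i j) :
    Integrable (fun s => residualForm A b W (y s)) μ ∧
      Integrable (fun s => residualForm A b (M s) (y s)) μ ∧
      ∫ s, residualForm A b (M s) (y s) ∂μ = ∫ s, residualForm A b W (y s) ∂μ := by
  have hres : ∀ z, A *ᵥ z - b = A *ᵥ (z - xstar) := fun z => by rw [mulVec_sub, hxstar]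
  have hprod : ∀ i j, Integrable (fun s => (A *ᵥ y s - b) i * (A *ᵥ y s - b) j) μ := by
    simpa only [hres] using
      integrable_mulVec_apply_mul_of_ae_dotProduct_self_le A (hy.sub_const xstar) hR
  exact ⟨integrable_dotProduct_mulVec_self fun i j => (hprod i j).mul_const (W i j),
    integrable_and_integral_dotProduct_mulVec_self_of_indepFun
      (hind.comp (by fun_prop : Measurable fun z => A *ᵥ z - b) measurable_id) hprod hM hW⟩

/-- Sublinear convergence of the Cesaro average of the SGD iterates
(the `β = 0` case of the stochastic heavy ball method, so `0 < ω < 2`).  Let `x*` be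
any vector with `A x* = b`.  Let `x̂_k = (1/k) Σ_{t=1}^{k} x_t` be the Cesaro average
of the SGD iterates `x (t+1) = x t − ω Aᵀ H_t (A x_t − b)`.  Then for all `k ≥ 1`,
`E[f(x̂_k)] ≤ ‖x0 − x*‖² / (2ω(2 − ω) k)`. -/
theorem sgd_cesaro_average_sublinear {m d : ℕ}
    {Ω : Type*} [MeasurableSpace Ω] (μ : Measure Ω) [IsProbabilityMeasure μ]
    (A : Matrix (Fin m) (Fin d) ℝ) (b : Fin m → ℝ)
    -- the i.i.d. random matrices `H_k`, a.s. symmetric psd with `H A Aᵀ H = H`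
    (H : ℕ → Ω → Matrix (Fin m) (Fin m) ℝ)
    (hHmeas : ∀ k, Measurable (H k))
    (hHiid : iIndepFun H μ)
    (hHident : ∀ k, μ.map (H k) = μ.map (H 0))
    (hHas : ∀ k, ∀ᵐ s ∂μ, (H k s).PosSemidef ∧ H k s * (A * Aᵀ) * H k s = H k s)
    (hHint : ∀ k i j, Integrable (fun s => H k s i j) μ)
    -- `W = E[H_0]`
    (W : Matrix (Fin m) (Fin m) ℝ)
    (hW : ∀ i j, W i j = ∫ s, H 0 s i j ∂μ)
    -- the objective `f`
    (f : (Fin d → ℝ) → ℝ)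
    (hf : ∀ y, f y = (1 / 2) * ((A *ᵥ y - b) ⬝ᵥ (W *ᵥ (A *ᵥ y - b))))
    -- stepsize (the case `β = 0` of `ω + 2β < 2`)
    (ω : ℝ) (hω0 : 0 < ω) (hω2 : ω < 2)
    -- the SGD iterates, started from deterministic `x0`
    (x0 : Fin d → ℝ)
    (x : ℕ → Ω → (Fin d → ℝ))
    (hx0 : ∀ s, x 0 s = x0)
    (hrec : ∀ t : ℕ, ∀ s,
      x (t + 1) s = x t s - ω • (Aᵀ *ᵥ (H t s *ᵥ (A *ᵥ x t s - b))))
    -- `x*` is any solution of the linear system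
    (xstar : Fin d → ℝ) (hxstar : A *ᵥ xstar = b) :
    ∀ k : ℕ, 1 ≤ k →
      ∫ s, f (((k : ℝ))⁻¹ • ∑ t ∈ Finset.Icc 1 k, x t s) ∂μ
        ≤ ((x0 - xstar) ⬝ᵥ (x0 - xstar)) / (2 * ω * (2 - ω) * k) := by
  intro k hk
  have hΦ := measurable_uncurry_sgdStep A b ω
  have hxmeas : ∀ t, Measurable (x t) := fun t =>
    (measurable_iSup_comap_of_recursion hΦ hx0 hrec t).mono
      (iSup₂_le fun i _ => (hHmeas i).comap_le) le_rfl
  have hWpsd : W.PosSemidef :=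
    posSemidef_of_ae_posSemidef ((hHas 0).mono fun _ hs => hs.1) (hHint 0) hW
  have hpath := (ae_all_iff.2 hHas).mono fun s hs =>
    sgd_dist_le_and_mul_sum_le hxstar hω0.le hω2.le hs (y := fun t => x t s) (hrec · s)
  simp only [hx0] at hpath
  have hEH : ∀ t i j, ∫ s, H t s i j ∂μ = W i j := fun t i j => by
    rw [hW]
    exact (IdentDistrib.comp ⟨(hHmeas t).aemeasurable, (hHmeas 0).aemeasurable, hHident t⟩
      (by fun_prop : Measurable fun M : Matrix (Fin m) (Fin m) ℝ => M i j)).integral_eq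
  have hexp := fun t => integrable_and_integral_residualForm_of_indepFun hxstar (hxmeas t)
    (hpath.mono fun _ hs => hs.1 t) (indepFun_of_recursion hHmeas hHiid hΦ hx0 hrec t)
    (hHint t) (hEH t)
  have hsum : ω * (2 - ω) * ∫ s, ∑ t ∈ Finset.Icc 1 k, residualForm A b (H t s) (x t s) ∂μ
      ≤ (x0 - xstar) ⬝ᵥ (x0 - xstar) := by
    rw [← integral_const_mul]
    simpa using integral_mono_ae ((integrable_finsetSum _ fun t _ => (hexp t).2.1).const_mul _)
      (integrable_const _) (hpath.mono fun _ hs => hs.2 _)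
  have hjensen := integral_residualForm_inv_card_smul_sum_le hWpsd (fun t => (hexp t).1)
    (Finset.nonempty_Icc.2 hk)
  simp only [Nat.card_Icc, add_tsub_cancel_right] at hjensen
  have h2ω : 0 < 2 - ω := sub_pos.2 hω2
  simp only [hf, integral_const_mul]
  calc 1 / 2 * ∫ s, residualForm A b W ((k : ℝ)⁻¹ • ∑ t ∈ Finset.Icc 1 k, x t s) ∂μ
      ≤ 1 / 2 * ((k : ℝ)⁻¹ * ∑ t ∈ Finset.Icc 1 k, ∫ s, residualForm A b W (x t s) ∂μ) := by
        gcongr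
    _ = ω * (2 - ω) * (∫ s, ∑ t ∈ Finset.Icc 1 k, residualForm A b (H t s) (x t s) ∂μ)
          / (2 * ω * (2 - ω) * k) := by
        rw [integral_finsetSum _ fun t _ => (hexp t).2.1,
          Finset.sum_congr rfl fun t _ => (hexp t).2.2]
        field_simp [h2ω.ne']
    _ ≤ (x0 - xstar) ⬝ᵥ (x0 - xstar) / (2 * ω * (2 - ω) * k) := by gcongr
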